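/- arXiv:1604.05093 — 5 statements merged into one kernel-verified Lean document; each statement's English description precedes it below -/
import Mathlib

section
/- Let f : (0,∞) → ℝ be an entropic function. Then for every natural number k the function G(ρ₁,…,ρ_k) = −Tr f(ρ₁ + ⋯ + ρ_k) + Tr f(ρ₁) + ⋯ + Tr f(ρ_k) is convex in k-tuples of positive definite operators ρ₁,…,ρ_k on any finite-dimensional Hilbert space; that is, every entropic function is subentropic. -/
open scoped Matrix
open Matrix
open scoped ComplexOrder

noncomputable section

/-- The trace of `f` applied (by the functional calculus) to a Hermitian matrix,
computed via the eigenvalues.  Junk value `0` on non-Hermitian matrices. -/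
def trFn (f : ℝ → ℝ) {d : Type} [Fintype d] [DecidableEq d] (ρ : Matrix d d ℂ) : ℝ :=
  if hρ : ρ.IsHermitian then ∑ i, f (hρ.eigenvalues i) else 0

/-- `f` applied to a Hermitian matrix by the functional calculus (spectral theorem).
Junk value `0` on non-Hermitian matrices. -/
def matFn (f : ℝ → ℝ) {d : Type} [Fintype d] [DecidableEq d] (ρ : Matrix d d ℂ) :
    Matrix d d ℂ :=
  if hρ : ρ.IsHermitian then
    (hρ.eigenvectorUnitary : Matrix d d ℂ) *
      Matrix.diagonal (fun i => (f (hρ.eigenvalues i) : ℂ)) *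
      star (hρ.eigenvectorUnitary : Matrix d d ℂ)
  else 0

/-- The partial trace over the second factor of a bipartite system `H₁ ⊗ H₂`,
where operators on `H₁ ⊗ H₂` are modelled as matrices indexed by `Fin m × Fin n`. -/
def partialTrace {m n : ℕ} (ρ : Matrix (Fin m × Fin n) (Fin m × Fin n) ℂ) :
    Matrix (Fin m) (Fin m) ℂ :=
  Matrix.of fun i j => ∑ k : Fin n, ρ (i, k) (j, k)

/-- A convex function `f : (0,∞) → ℝ` is entropic if on every finite-dimensional
bipartite system the map `ρ ↦ -Tr f(ρ₁) + Tr f(ρ)` is convex in positive definite `ρ`,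
where `ρ₁` is the partial trace of `ρ` on the first factor. -/
def IsEntropic (f : ℝ → ℝ) : Prop :=
  ConvexOn ℝ (Set.Ioi (0 : ℝ)) f ∧
  ∀ m n : ℕ,
    ConvexOn ℝ {ρ : Matrix (Fin m × Fin n) (Fin m × Fin n) ℂ | ρ.PosDef}
      (fun ρ => - trFn f (partialTrace ρ) + trFn f ρ)

/-- A convex function `f : (0,∞) → ℝ` is subentropic of order `k` if
`G(ρ₁,…,ρ_k) = -Tr f(ρ₁+⋯+ρ_k) + Tr f(ρ₁) + ⋯ + Tr f(ρ_k)` is convex in `k`-tuples of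
positive definite operators on any finite-dimensional Hilbert space. -/
def SubentropicOfOrder (f : ℝ → ℝ) (k : ℕ) : Prop :=
  ConvexOn ℝ (Set.Ioi (0 : ℝ)) f ∧
  ∀ n : ℕ,
    ConvexOn ℝ {ρ : Fin k → Matrix (Fin n) (Fin n) ℂ | ∀ i, (ρ i).PosDef}
      (fun ρ => - trFn f (∑ i, ρ i) + ∑ i, trFn f (ρ i))

/-- A function is subentropic if it is subentropic of all orders. -/
def Subentropic (f : ℝ → ℝ) : Prop :=
  ∀ k : ℕ, SubentropicOfOrder f k

/-- Divided difference of `g`, with `g'` on the diagonal. -/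
def divDiff (g : ℝ → ℝ) (x y : ℝ) : ℝ :=
  if x = y then deriv g x else (g x - g y) / (x - y)

/-- Conjugation `h ↦ U * h * U*` as a linear operator on matrices. -/
def conjEnd {n : ℕ} (U : Matrix (Fin n) (Fin n) ℂ) :
    Module.End ℂ (Matrix (Fin n) (Fin n) ℂ) :=
  (LinearMap.mulLeft ℂ U).comp (LinearMap.mulRight ℂ (star U))

/-- Hadamard (entrywise) multiplication by a fixed matrix `L`, as a linear operator. -/
def hadamardEnd {n : ℕ} (L : Matrix (Fin n) (Fin n) ℂ) :
    Module.End ℂ (Matrix (Fin n) (Fin n) ℂ) where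
  toFun h := L ⊙ h
  map_add' h₁ h₂ := Matrix.hadamard_add L h₁ h₂
  map_smul' c h := Matrix.hadamard_smul L h c

/-- The Fréchet differential `dg(ρ)` of the matrix function induced by `g` at the
Hermitian matrix `ρ`: in a basis diagonalising `ρ` it acts as the Hadamard product
with the Löwner matrix of divided differences of `g`.  Junk value `0` at
non-Hermitian matrices. -/
def frechetDiff (g : ℝ → ℝ) {n : ℕ} (ρ : Matrix (Fin n) (Fin n) ℂ) :
    Module.End ℂ (Matrix (Fin n) (Fin n) ℂ) :=
  if hρ : ρ.IsHermitian then
    (conjEnd (hρ.eigenvectorUnitary : Matrix (Fin n) (Fin n) ℂ)).comp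
      ((hadamardEnd (Matrix.of fun i j =>
          (divDiff g (hρ.eigenvalues i) (hρ.eigenvalues j) : ℂ))).comp
        (conjEnd (star (hρ.eigenvectorUnitary : Matrix (Fin n) (Fin n) ℂ))))
  else 0

/-- The order, with respect to the trace inner product, between operators on `B(H)`:
`T ≤ S` iff `S - T` is a positive superoperator. -/
def endLE {n : ℕ} (T S : Module.End ℂ (Matrix (Fin n) (Fin n) ℂ)) : Prop :=
  ∀ h : Matrix (Fin n) (Fin n) ℂ, 0 ≤ Matrix.trace (star h * (S h - T h))

/-- The harmonic mean `H₂(A,B) = 2 (A⁻¹ + B⁻¹)⁻¹` of two (positive definite, hence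
invertible) operators on `B(H)`. -/
def harmonicMeanEnd {n : ℕ} (A B : Module.End ℂ (Matrix (Fin n) (Fin n) ℂ)) :
    Module.End ℂ (Matrix (Fin n) (Fin n) ℂ) :=
  (2 : ℂ) • Ring.inverse (Ring.inverse A + Ring.inverse B)

/-- The amplification `id_n ⊗ Φ` of a linear map on matrices. -/
def amplify {m k : ℕ} (Φ : Matrix (Fin m) (Fin m) ℂ →ₗ[ℂ] Matrix (Fin k) (Fin k) ℂ)
    (n : ℕ) (A : Matrix (Fin n × Fin m) (Fin n × Fin m) ℂ) :
    Matrix (Fin n × Fin k) (Fin n × Fin k) ℂ :=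
  Matrix.of fun p q => Φ (Matrix.of fun x y => A (p.1, x) (q.1, y)) p.2 q.2

/-- A linear map on matrices is completely positive if all its amplifications
preserve positive semidefiniteness. -/
def IsCompletelyPositive {m k : ℕ}
    (Φ : Matrix (Fin m) (Fin m) ℂ →ₗ[ℂ] Matrix (Fin k) (Fin k) ℂ) : Prop :=
  ∀ n : ℕ, ∀ A : Matrix (Fin n × Fin m) (Fin n × Fin m) ℂ,
    A.PosSemidef → (amplify Φ n A).PosSemidef

/-- A quantum channel is a completely positive trace preserving linear map. -/
def IsQuantumChannel {m k : ℕ}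
    (Φ : Matrix (Fin m) (Fin m) ℂ →ₗ[ℂ] Matrix (Fin k) (Fin k) ℂ) : Prop :=
  IsCompletelyPositive Φ ∧ ∀ A, (Φ A).trace = A.trace

/-! Send a `k`-tuple `ρ₁, …, ρ_k` of `n × n` matrices to the block-diagonal matrix
`ρ₁ ⊕ ⋯ ⊕ ρ_k` on `ℂⁿ ⊗ ℂᵏ`. This map is linear, its image is positive definite exactly when
every `ρᵢ` is, its partial trace over `ℂᵏ` is `ρ₁ + ⋯ + ρ_k`, and its spectrum is the union of
the spectra of the `ρᵢ`, so that `Tr f(ρ₁ ⊕ ⋯ ⊕ ρ_k) = Σ Tr f(ρᵢ)`. Hence `G` is the entropic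
functional `ρ ↦ -Tr f(ρ₁) + Tr f(ρ)` precomposed with a linear map, and is therefore convex. -/

namespace Matrix

@[simps]
def blockDiagonalLinearMap {m n o : Type*} [DecidableEq o] (R : Type*) [Semiring R] {α : Type*}
    [AddCommMonoid α] [Module R α] : (o → Matrix m n α) →ₗ[R] Matrix (m × o) (n × o) α where
  toFun := blockDiagonal
  map_add' := blockDiagonal_add
  map_smul' := blockDiagonal_smul

variable {m o : Type*} [Fintype m] [Fintype o] [DecidableEq o]

open Polynomial in
theorem charmatrix_blockDiagonal [DecidableEq m] {R : Type*} [CommRing R]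
    (M : o → Matrix m m R) :
    charmatrix (blockDiagonal M) = blockDiagonal fun a => charmatrix (M a) := by
  simp only [charmatrix, RingHom.mapMatrix_apply, scalar_apply]
  rw [blockDiagonal_map _ _ (map_zero C), ← blockDiagonal_diagonal (fun (_ : o) (_ : m) => X),
    ← blockDiagonal_sub]
  rfl

theorem charpoly_blockDiagonal [DecidableEq m] {R : Type*} [CommRing R]
    (M : o → Matrix m m R) :
    (blockDiagonal M).charpoly = ∏ a, (M a).charpoly := by
  rw [charpoly, charmatrix_blockDiagonal, det_blockDiagonal]
  rfl

theorem posDef_blockDiagonal_iff {R : Type*} [CommRing R] [PartialOrder R] [StarRing R]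
    [IsOrderedCancelAddMonoid R] {M : o → Matrix m m R} :
    (blockDiagonal M).PosDef ↔ ∀ a, (M a).PosDef := by
  refine ⟨fun h a => ?_, fun h => ?_⟩
  · convert h.submatrix (e := fun i => (i, a)) fun i j hij => (Prod.mk.inj hij).1
    ext i j
    simp [blockDiagonal_apply]
  · refine PosDef.of_dotProduct_mulVec_pos
      (isHermitian_blockDiagonal_iff.mpr fun a => (h a).isHermitian) fun x hx => ?_
    have hsplit : star x ⬝ᵥ blockDiagonal M *ᵥ x
        = ∑ a, star (fun i => x (i, a)) ⬝ᵥ M a *ᵥ fun i => x (i, a) := by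
      simp only [dotProduct, mulVec, blockDiagonal_apply, Fintype.sum_prod_type,
        Pi.star_apply, ite_mul, zero_mul, Finset.sum_ite_eq, Finset.mem_univ, if_true]
      exact Finset.sum_comm
    obtain ⟨⟨i, a⟩, hxia⟩ := Function.ne_iff.mp hx
    rw [hsplit]
    exact Finset.sum_pos' (fun b _ => (h b).posSemidef.dotProduct_mulVec_nonneg _)
      ⟨a, Finset.mem_univ _, (h a).dotProduct_mulVec_pos fun h0 => hxia (congrFun h0 i)⟩

end Matrix

open Matrix

theorem trFn_eq_sum_roots_charpoly {d : Type} [Fintype d] [DecidableEq d] (f : ℝ → ℝ)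
    {ρ : Matrix d d ℂ} (hρ : ρ.IsHermitian) :
    trFn f ρ = (ρ.charpoly.roots.map fun z => f z.re).sum := by
  rw [trFn, dif_pos hρ, hρ.roots_charpoly_eq_eigenvalues, Multiset.map_map]
  simp [Function.comp_def]

theorem trFn_blockDiagonal {d o : Type} [Fintype d] [DecidableEq d] [Fintype o] [DecidableEq o]
    (f : ℝ → ℝ) {ρ : o → Matrix d d ℂ} (hρ : ∀ a, (ρ a).IsHermitian) :
    trFn f (blockDiagonal ρ) = ∑ a, trFn f (ρ a) := by
  have hne : ∏ a, (ρ a).charpoly ≠ 0 :=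
    Finset.prod_ne_zero_iff.mpr fun a _ => (ρ a).charpoly_monic.ne_zero
  rw [trFn_eq_sum_roots_charpoly f (isHermitian_blockDiagonal_iff.mpr hρ),
    charpoly_blockDiagonal, Polynomial.roots_prod _ _ hne, Multiset.map_bind, Multiset.sum_bind,
    Finset.sum_eq_multiset_sum]
  simp only [trFn_eq_sum_roots_charpoly f (hρ _)]

theorem partialTrace_blockDiagonal {m n : ℕ} (ρ : Fin n → Matrix (Fin m) (Fin m) ℂ) :
    partialTrace (blockDiagonal ρ) = ∑ a, ρ a := by
  ext i j
  simp [partialTrace, blockDiagonal_apply, Matrix.sum_apply]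

/-- Every entropic function is subentropic: for every `k` the function
`G(ρ₁,…,ρ_k) = -Tr f(ρ₁+⋯+ρ_k) + Tr f(ρ₁) + ⋯ + Tr f(ρ_k)` is convex in `k`-tuples
of positive definite operators on any finite-dimensional Hilbert space. -/
theorem entropic_implies_subentropic (f : ℝ → ℝ) (hf : IsEntropic f) :
    Subentropic f := by
  intro k
  refine ⟨hf.1, fun n => ?_⟩
  have hblock := (hf.2 n k).comp_linearMap (blockDiagonalLinearMap ℝ)
  have hdom : blockDiagonalLinearMap ℝ ⁻¹' {ρ : Matrix (Fin n × Fin k) _ ℂ | ρ.PosDef}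
      = {ρ | ∀ i, (ρ i).PosDef} := Set.ext fun _ => posDef_blockDiagonal_iff
  rw [hdom] at hblock
  refine hblock.congr fun ρ hρ => ?_
  simp only [Function.comp_apply, blockDiagonalLinearMap_apply, partialTrace_blockDiagonal,
    trFn_blockDiagonal f fun i => (hρ i).isHermitian]

end
end

section
/- A function f : (0,∞) → ℝ is subentropic (i.e., subentropic of every order k) if and only if it is subentropic of order two. -/
open scoped Matrix
open Matrix
open scoped ComplexOrder

noncomputable section

/-!
Splitting off the last operator, `G(ρ₁,…,ρ_{k+1})` is the sum of `G(ρ₁,…,ρ_k)` and of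
`G(ρ₁+⋯+ρ_k, ρ_{k+1})`. The second term is the order-two function composed with a linear map
that sends positive definite tuples to positive definite pairs, so convexity of order two
propagates to every order by induction; orders zero and one are trivial since `G` is constant.
-/

theorem convex_setOf_posDef {m : Type*} : Convex ℝ {A : Matrix m m ℂ | A.PosDef} :=
  convex_iff_forall_pos.2 fun _ hA _ hB _ _ ha hb _ => (hA.smul ha).add (hB.smul hb)

theorem convex_setOf_forall_posDef {m : Type*} {k : ℕ} :
    Convex ℝ {ρ : Fin k → Matrix m m ℂ | ∀ i, (ρ i).PosDef} :=
  fun _ hx _ hy _ _ ha hb hab i => convex_setOf_posDef (hx i) (hy i) ha hb hab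

def mergeInit {M : Type*} [AddCommMonoid M] [Module ℝ M] (k : ℕ) :
    (Fin (k + 1) → M) →ₗ[ℝ] (Fin 2 → M) where
  toFun ρ := ![∑ i, Fin.init ρ i, ρ (Fin.last k)]
  map_add' ρ σ := by
    ext1 j; fin_cases j <;> simp [Fin.init, Finset.sum_add_distrib]
  map_smul' c ρ := by
    ext1 j; fin_cases j <;> simp [Fin.init, Finset.smul_sum]

theorem mergeInit_posDef {m : Type*} {k : ℕ} {ρ : Fin (k + 2) → Matrix m m ℂ}
    (hρ : ∀ i, (ρ i).PosDef) :
    ∀ j, (mergeInit (k + 1) ρ j).PosDef := by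
  intro j
  fin_cases j
  · exact Matrix.posDef_sum (s := Finset.univ) Finset.univ_nonempty fun i _ =>
      hρ (Fin.castSucc i)
  · exact hρ _

section Subentropic

variable {d : Type} [Fintype d] [DecidableEq d]

def subentropicGap (f : ℝ → ℝ) {k : ℕ} (ρ : Fin k → Matrix d d ℂ) : ℝ :=
  - trFn f (∑ i, ρ i) + ∑ i, trFn f (ρ i)

theorem subentropicOfOrder_iff {f : ℝ → ℝ} {k : ℕ} :
    SubentropicOfOrder f k ↔ ConvexOn ℝ (Set.Ioi 0) f ∧
      ∀ n : ℕ, ConvexOn ℝ {ρ : Fin k → Matrix (Fin n) (Fin n) ℂ | ∀ i, (ρ i).PosDef}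
        (subentropicGap f) :=
  Iff.rfl

theorem subentropicGap_eq_mergeInit_add_init (f : ℝ → ℝ) {k : ℕ}
    (ρ : Fin (k + 1) → Matrix d d ℂ) :
    subentropicGap f ρ = subentropicGap f (mergeInit k ρ) + subentropicGap f (Fin.init ρ) := by
  simp only [subentropicGap, mergeInit, Fin.init, LinearMap.coe_mk, AddHom.coe_mk,
    Fin.sum_univ_two, cons_val_zero, cons_val_one, Fin.sum_univ_castSucc (f := ρ),
    Fin.sum_univ_castSucc (f := fun i => trFn f (ρ i))]
  ring

end Subentropic

theorem subentropicOfOrder_zero {f : ℝ → ℝ} (hf : ConvexOn ℝ (Set.Ioi 0) f) :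
    SubentropicOfOrder f 0 := by
  refine ⟨hf, fun n => ?_⟩
  simpa using convexOn_const (-trFn f (0 : Matrix (Fin n) (Fin n) ℂ))
    (convex_setOf_forall_posDef (m := Fin n) (k := 0))

theorem subentropicOfOrder_one {f : ℝ → ℝ} (hf : ConvexOn ℝ (Set.Ioi 0) f) :
    SubentropicOfOrder f 1 := by
  refine ⟨hf, fun n => ?_⟩
  simpa using convexOn_const (0 : ℝ) (convex_setOf_forall_posDef (m := Fin n) (k := 1))

theorem SubentropicOfOrder.succ {f : ℝ → ℝ} {k : ℕ} (h2 : SubentropicOfOrder f 2)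
    (hk : SubentropicOfOrder f (k + 1)) : SubentropicOfOrder f (k + 2) := by
  rw [subentropicOfOrder_iff] at *
  refine ⟨h2.1, fun n => ?_⟩
  set S := {ρ : Fin (k + 2) → Matrix (Fin n) (Fin n) ℂ | ∀ i, (ρ i).PosDef}
  have hmerge : ConvexOn ℝ S (subentropicGap f ∘ mergeInit (k + 1)) :=
    ((h2.2 n).comp_linearMap _).subset (fun _ hρ => mergeInit_posDef hρ)
      convex_setOf_forall_posDef
  have hinit : ConvexOn ℝ S (subentropicGap f ∘ Fin.init) :=
    ((hk.2 n).comp_linearMap (LinearMap.funLeft ℝ _ Fin.castSucc)).subset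
      (fun _ hρ i => hρ (Fin.castSucc i)) convex_setOf_forall_posDef
  exact (hmerge.add hinit).congr fun ρ _ => (subentropicGap_eq_mergeInit_add_init f ρ).symm

/-- A function is subentropic (of every order) iff it is subentropic of
order two. -/
theorem subentropic_iff_subentropic_order_two (f : ℝ → ℝ) :
    Subentropic f ↔ SubentropicOfOrder f 2 := by
  refine ⟨fun h => h 2, fun h2 k => ?_⟩
  obtain _ | k := k
  · exact subentropicOfOrder_zero h2.1
  induction k with
  | zero => exact subentropicOfOrder_one h2.1
  | succ k ih => exact h2.succ ih

end
end

section
/- Let f : (0,∞) → ℝ be a twice continuously differentiable function with strictly positive second derivative. The inequality Tr (a+b)* df'(ρ+σ) (a+b) ≤ Tr a* df'(ρ) a + Tr b* df'(σ) b for all operators a, b holds if and only if df'(ρ+σ) ≤ (1/2) H₂(df'(ρ), df'(σ)), where H₂ denotes the harmonic mean of two positive definite operators on B(H). -/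
open scoped Matrix
open Matrix
open scoped ComplexOrder

noncomputable section

section AuxProof

open Matrix Finset

variable {n : ℕ}

private lemma ip_conj (x y : Matrix (Fin n) (Fin n) ℂ) :
    Matrix.trace (star x * y) = star (Matrix.trace (star y * x)) := by
  rw [← Matrix.trace_conjTranspose, ← Matrix.star_eq_conjTranspose, StarMul.star_mul, star_star]

/-- The operator `h ↦ U (L ⊙ (U* h U)) U*`. -/
def opOf (U L : Matrix (Fin n) (Fin n) ℂ) : Module.End ℂ (Matrix (Fin n) (Fin n) ℂ) :=
  (conjEnd U).comp ((hadamardEnd L).comp (conjEnd (star U)))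

lemma opOf_apply (U L k : Matrix (Fin n) (Fin n) ℂ) :
    opOf U L k = U * (L ⊙ (star U * k * U)) * star U := by
  simp only [opOf, conjEnd, hadamardEnd, LinearMap.coe_comp, Function.comp_apply,
    LinearMap.mulLeft_apply, LinearMap.mulRight_apply, LinearMap.coe_mk, AddHom.coe_mk,
    star_star, mul_assoc]

lemma frechetDiff_eq_opOf (g : ℝ → ℝ) (ρ : Matrix (Fin n) (Fin n) ℂ) (hρ : ρ.IsHermitian) :
    frechetDiff g ρ = opOf (hρ.eigenvectorUnitary : Matrix (Fin n) (Fin n) ℂ)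
      (Matrix.of fun i j => (divDiff g (hρ.eigenvalues i) (hρ.eigenvalues j) : ℂ)) := by
  unfold frechetDiff
  rw [dif_pos hρ]
  rfl

lemma ip_opOf (U L h k : Matrix (Fin n) (Fin n) ℂ) :
    Matrix.trace (star h * opOf U L k) =
      ∑ i, ∑ j, L i j * star ((star U * h * U) i j) * ((star U * k * U) i j) := by
  rw [opOf_apply]
  have e0 : star h * (U * (L ⊙ (star U * k * U)) * star U)
      = (star h * U) * (L ⊙ (star U * k * U)) * star U := by
    simp only [mul_assoc]
  have e2 : star U * star h * U = star (star U * h * U) := by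
    rw [StarMul.star_mul, StarMul.star_mul, star_star, mul_assoc]
  rw [e0, Matrix.trace_mul_cycle, ← mul_assoc, e2]
  simp only [Matrix.trace, Matrix.diag_apply, Matrix.mul_apply, Matrix.star_apply,
    Matrix.hadamard_apply]
  rw [Finset.sum_comm]
  refine Finset.sum_congr rfl fun i _ => Finset.sum_congr rfl fun j _ => by ring

lemma opOf_mul (U L L' : Matrix (Fin n) (Fin n) ℂ) (h1 : star U * U = 1) :
    opOf U L * opOf U L' = opOf U (L ⊙ L') := by
  apply LinearMap.ext
  intro k
  rw [Module.End.mul_apply, opOf_apply, opOf_apply, opOf_apply]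
  have e : star U * (U * (L' ⊙ (star U * k * U)) * star U) * U = L' ⊙ (star U * k * U) := by
    simp only [← mul_assoc]
    rw [h1, one_mul, mul_assoc, h1, mul_one]
  rw [e, ← Matrix.hadamard_assoc]

lemma opOf_one (U : Matrix (Fin n) (Fin n) ℂ) (h2 : U * star U = 1) :
    opOf U (Matrix.of fun _ _ => (1 : ℂ)) = 1 := by
  apply LinearMap.ext
  intro k
  rw [opOf_apply, Module.End.one_apply]
  have e : (Matrix.of fun _ _ => (1 : ℂ)) ⊙ (star U * k * U) = star U * k * U := by
    ext i j
    simp [Matrix.hadamard_apply]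
  rw [e]
  simp only [← mul_assoc]
  rw [h2, one_mul, mul_assoc, h2, mul_one]

lemma opOf_sa (U : Matrix (Fin n) (Fin n) ℂ) (r : Fin n → Fin n → ℝ)
    (h k : Matrix (Fin n) (Fin n) ℂ) :
    Matrix.trace (star h * opOf U (Matrix.of fun i j => (r i j : ℂ)) k) =
      Matrix.trace (star (opOf U (Matrix.of fun i j => (r i j : ℂ)) h) * k) := by
  have h1 := ip_opOf U (Matrix.of fun i j => (r i j : ℂ)) h k
  have h2 := ip_opOf U (Matrix.of fun i j => (r i j : ℂ)) k h
  rw [h1, ip_conj, h2, star_sum]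
  refine Finset.sum_congr rfl fun i _ => ?_
  rw [star_sum]
  refine Finset.sum_congr rfl fun j _ => ?_
  simp only [Matrix.of_apply, star_mul', star_star, Complex.star_def, Complex.conj_ofReal, Complex.conj_conj]
  ring

lemma opOf_quad (U : Matrix (Fin n) (Fin n) ℂ) (r : Fin n → Fin n → ℝ)
    (h : Matrix (Fin n) (Fin n) ℂ) :
    Matrix.trace (star h * opOf U (Matrix.of fun i j => (r i j : ℂ)) h) =
      ((∑ i, ∑ j, r i j * Complex.normSq ((star U * h * U) i j) : ℝ) : ℂ) := by
  rw [ip_opOf]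
  push_cast
  refine Finset.sum_congr rfl fun i _ => Finset.sum_congr rfl fun j _ => ?_
  rw [← Complex.mul_conj]
  simp only [Matrix.of_apply, RCLike.star_def]
  ring

lemma opOf_pos (U : Matrix (Fin n) (Fin n) ℂ) (r : Fin n → Fin n → ℝ)
    (hr : ∀ i j, 0 ≤ r i j) (h : Matrix (Fin n) (Fin n) ℂ) :
    0 ≤ Matrix.trace (star h * opOf U (Matrix.of fun i j => (r i j : ℂ)) h) := by
  rw [opOf_quad]
  refine Complex.zero_le_real.mpr ?_
  refine Finset.sum_nonneg fun i _ => Finset.sum_nonneg fun j _ => ?_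
  exact mul_nonneg (hr i j) (Complex.normSq_nonneg _)

lemma opOf_def (U : Matrix (Fin n) (Fin n) ℂ) (r : Fin n → Fin n → ℝ)
    (hr : ∀ i j, 0 < r i j) (h2 : U * star U = 1) (h : Matrix (Fin n) (Fin n) ℂ)
    (h0 : Matrix.trace (star h * opOf U (Matrix.of fun i j => (r i j : ℂ)) h) = 0) :
    h = 0 := by
  rw [opOf_quad, Complex.ofReal_eq_zero] at h0
  have hx : star U * h * U = 0 := by
    ext i j
    have hterm : ∀ i ∈ Finset.univ (α := Fin n),
        0 ≤ ∑ j, r i j * Complex.normSq ((star U * h * U) i j) :=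
      fun i _ => Finset.sum_nonneg fun j _ =>
        mul_nonneg (hr i j).le (Complex.normSq_nonneg _)
    have hi := (Finset.sum_eq_zero_iff_of_nonneg hterm).mp h0 i (Finset.mem_univ i)
    have hterm2 : ∀ j ∈ Finset.univ (α := Fin n),
        0 ≤ r i j * Complex.normSq ((star U * h * U) i j) :=
      fun j _ => mul_nonneg (hr i j).le (Complex.normSq_nonneg _)
    have hj := (Finset.sum_eq_zero_iff_of_nonneg hterm2).mp hi j (Finset.mem_univ j)
    have : Complex.normSq ((star U * h * U) i j) = 0 := by
      rcases mul_eq_zero.mp hj with h' | h'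
      · exact absurd h' (hr i j).ne'
      · exact h'
    simpa using Complex.normSq_eq_zero.mp this
  have hh : h = U * (star U * h * U) * star U := by
    simp only [← mul_assoc]
    rw [h2, one_mul, mul_assoc, h2, mul_one]
  rw [hh, hx, Matrix.mul_zero, Matrix.zero_mul]

lemma bilin_expand (S : Module.End ℂ (Matrix (Fin n) (Fin n) ℂ))
    (x y : Matrix (Fin n) (Fin n) ℂ) :
    Matrix.trace (star (x + y) * S (x + y)) =
      Matrix.trace (star x * S x) + Matrix.trace (star x * S y) +
      Matrix.trace (star y * S x) + Matrix.trace (star y * S y) := by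
  rw [map_add, star_add, add_mul, mul_add, mul_add, Matrix.trace_add, Matrix.trace_add,
    Matrix.trace_add]
  ring

/-- The abstract variational characterisation. -/
lemma key_lemma (T A B Ai Bi : Module.End ℂ (Matrix (Fin n) (Fin n) ℂ))
    (hAAi : A * Ai = 1) (hAiA : Ai * A = 1) (hBBi : B * Bi = 1) (hBiB : Bi * B = 1)
    (hA_sa : ∀ h k, Matrix.trace (star h * A k) = Matrix.trace (star (A h) * k))
    (hB_sa : ∀ h k, Matrix.trace (star h * B k) = Matrix.trace (star (B h) * k))
    (hAi_sa : ∀ h k, Matrix.trace (star h * Ai k) = Matrix.trace (star (Ai h) * k))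
    (hBi_sa : ∀ h k, Matrix.trace (star h * Bi k) = Matrix.trace (star (Bi h) * k))
    (hA_pos : ∀ h, 0 ≤ Matrix.trace (star h * A h))
    (hB_pos : ∀ h, 0 ≤ Matrix.trace (star h * B h))
    (hAi_pos : ∀ h, 0 ≤ Matrix.trace (star h * Ai h))
    (hBi_pos : ∀ h, 0 ≤ Matrix.trace (star h * Bi h))
    (hAi_def : ∀ h, Matrix.trace (star h * Ai h) = 0 → h = 0) :
    (∀ a b : Matrix (Fin n) (Fin n) ℂ,
        Matrix.trace (star (a + b) * T (a + b)) ≤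
          Matrix.trace (star a * A a) + Matrix.trace (star b * B b)) ↔
      endLE T (((1 : ℂ) / 2) • harmonicMeanEnd A B) := by
  set M : Module.End ℂ (Matrix (Fin n) (Fin n) ℂ) := Ai + Bi with hM
  have hMapp : ∀ h, M h = Ai h + Bi h := fun h => rfl
  have hM_inj : Function.Injective M := by
    have hker : ∀ h, M h = 0 → h = 0 := by
      intro h hMh
      have h0 : Matrix.trace (star h * Ai h) + Matrix.trace (star h * Bi h) = 0 := by
        have : Matrix.trace (star h * M h) = 0 := by rw [hMh, Matrix.mul_zero, Matrix.trace_zero]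
        rw [hMapp, mul_add, Matrix.trace_add] at this
        exact this
      have hA0 : Matrix.trace (star h * Ai h) = 0 := by
        have h1 : Matrix.trace (star h * Ai h) = -Matrix.trace (star h * Bi h) :=
          eq_neg_of_add_eq_zero_left h0
        refine le_antisymm ?_ (hAi_pos h)
        rw [h1]
        exact neg_nonpos.mpr (hBi_pos h)
      exact hAi_def h hA0
    intro x y hxy
    have := hker (x - y) (by rw [map_sub, hxy, sub_self])
    exact sub_eq_zero.mp this
  have hM_unit : IsUnit M :=
    (Module.End.isUnit_iff M).mpr ⟨hM_inj, LinearMap.injective_iff_surjective.mp hM_inj⟩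
  set C : Module.End ℂ (Matrix (Fin n) (Fin n) ℂ) := Ring.inverse M with hC
  have hMC : M * C = 1 := Ring.mul_inverse_cancel M hM_unit
  have hCM : C * M = 1 := Ring.inverse_mul_cancel M hM_unit
  have hMCa : ∀ h, M (C h) = h := fun h => by
    rw [← Module.End.mul_apply, hMC, Module.End.one_apply]
  have hHeq : ((1 : ℂ) / 2) • harmonicMeanEnd A B = C := by
    have hIA : Ring.inverse A = Ai := by
      have : Ring.inverse ((⟨A, Ai, hAAi, hAiA⟩ : (Module.End ℂ (Matrix (Fin n) (Fin n) ℂ))ˣ) :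
          Module.End ℂ (Matrix (Fin n) (Fin n) ℂ)) = Ai := Ring.inverse_unit _
      exact this
    have hIB : Ring.inverse B = Bi := by
      have : Ring.inverse ((⟨B, Bi, hBBi, hBiB⟩ : (Module.End ℂ (Matrix (Fin n) (Fin n) ℂ))ˣ) :
          Module.End ℂ (Matrix (Fin n) (Fin n) ℂ)) = Bi := Ring.inverse_unit _
      exact this
    rw [harmonicMeanEnd, hIA, hIB, smul_smul, ← hM, ← hC]
    norm_num
  constructor
  · intro hyp h
    rw [hHeq]
    set a := Ai (C h) with ha
    set b := Bi (C h) with hb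
    have hab : a + b = h := by rw [ha, hb, ← hMapp, hMCa]
    have h1 := hyp a b
    rw [hab] at h1
    have hAa : A a = C h := by rw [ha, ← Module.End.mul_apply, hAAi, Module.End.one_apply]
    have hBb : B b = C h := by rw [hb, ← Module.End.mul_apply, hBBi, Module.End.one_apply]
    have h2 : Matrix.trace (star a * A a) + Matrix.trace (star b * B b) =
        Matrix.trace (star h * C h) := by
      rw [hAa, hBb, ← hab, star_add, add_mul, Matrix.trace_add]
    rw [h2] at h1
    rw [Matrix.mul_sub, Matrix.trace_sub, sub_nonneg]
    exact h1
  · intro hle a b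
    rw [hHeq] at hle
    set c := a + b with hc
    have h1 : Matrix.trace (star c * T c) ≤ Matrix.trace (star c * C c) := by
      have := hle c
      rwa [Matrix.mul_sub, Matrix.trace_sub, sub_nonneg] at this
    refine h1.trans ?_
    set p := Ai (C c) with hp
    set q := Bi (C c) with hq
    have hpq : p + q = c := by rw [hp, hq, ← hMapp, hMCa]
    set u := a - p with hu
    set v := b - q with hv
    have hau : a = u + p := by rw [hu]; abel
    have hbv : b = v + q := by rw [hv]; abel
    have hAp : A p = C c := by rw [hp, ← Module.End.mul_apply, hAAi, Module.End.one_apply]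
    have hBq : B q = C c := by rw [hq, ← Module.End.mul_apply, hBBi, Module.End.one_apply]
    have huv : u + v = 0 := by
      have h' : a - p + (b - q) = a + b - (p + q) := by abel
      rw [hu, hv, h', hpq, ← hc, sub_self]
    have hA' : Matrix.trace (star a * A a) =
        Matrix.trace (star u * A u) + Matrix.trace (star u * C c) +
        Matrix.trace (star (C c) * u) + Matrix.trace (star p * C c) := by
      conv_lhs => rw [hau]
      rw [bilin_expand, hAp, hA_sa p u, hAp]
    have hB' : Matrix.trace (star b * B b) =
        Matrix.trace (star v * B v) + Matrix.trace (star v * C c) +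
        Matrix.trace (star (C c) * v) + Matrix.trace (star q * C c) := by
      conv_lhs => rw [hbv]
      rw [bilin_expand, hBq, hB_sa q v, hBq]
    have e1 : Matrix.trace (star u * C c) + Matrix.trace (star v * C c) = 0 := by
      rw [← Matrix.trace_add, ← add_mul, ← star_add, huv]
      simp
    have e2 : Matrix.trace (star (C c) * u) + Matrix.trace (star (C c) * v) = 0 := by
      rw [← Matrix.trace_add, ← mul_add, huv, Matrix.mul_zero, Matrix.trace_zero]
    have e3 : Matrix.trace (star p * C c) + Matrix.trace (star q * C c) =
        Matrix.trace (star c * C c) := by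
      rw [← Matrix.trace_add, ← add_mul, ← star_add, hpq]
    have etotal : Matrix.trace (star a * A a) + Matrix.trace (star b * B b) =
        Matrix.trace (star u * A u) + Matrix.trace (star v * B v) +
          Matrix.trace (star c * C c) := by
      rw [hA', hB']
      linear_combination e1 + e2 + e3
    rw [etotal]
    exact le_add_of_nonneg_left (add_nonneg (hA_pos u) (hB_pos v))

/-- Packaged facts about `frechetDiff g ρ` for positive definite `ρ` when the divided
differences of `g` are strictly positive. -/
lemma frechet_package (g : ℝ → ℝ) (ρ : Matrix (Fin n) (Fin n) ℂ) (hρ : ρ.PosDef)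
    (hd : ∀ x, 0 < x → ∀ y, 0 < y → 0 < divDiff g x y) :
    ∃ S' : Module.End ℂ (Matrix (Fin n) (Fin n) ℂ),
      frechetDiff g ρ * S' = 1 ∧ S' * frechetDiff g ρ = 1 ∧
      (∀ h k, Matrix.trace (star h * frechetDiff g ρ k) =
        Matrix.trace (star (frechetDiff g ρ h) * k)) ∧
      (∀ h k, Matrix.trace (star h * S' k) = Matrix.trace (star (S' h) * k)) ∧
      (∀ h, 0 ≤ Matrix.trace (star h * frechetDiff g ρ h)) ∧
      (∀ h, 0 ≤ Matrix.trace (star h * S' h)) ∧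
      (∀ h, Matrix.trace (star h * S' h) = 0 → h = 0) := by
  have hH : ρ.IsHermitian := hρ.1
  set U : Matrix (Fin n) (Fin n) ℂ := (hH.eigenvectorUnitary : Matrix (Fin n) (Fin n) ℂ)
    with hUdef
  have hU1 : star U * U = 1 := Unitary.coe_star_mul_self _
  have hU2 : U * star U = 1 := Unitary.coe_mul_star_self _
  set r : Fin n → Fin n → ℝ := fun i j => divDiff g (hH.eigenvalues i) (hH.eigenvalues j)
    with hrdef
  have hrpos : ∀ i j, 0 < r i j := fun i j =>
    hd _ (hρ.eigenvalues_pos i) _ (hρ.eigenvalues_pos j)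
  have hSeq : frechetDiff g ρ = opOf U (Matrix.of fun i j => (r i j : ℂ)) :=
    frechetDiff_eq_opOf g ρ hH
  set ri : Fin n → Fin n → ℝ := fun i j => (r i j)⁻¹ with hridef
  refine ⟨opOf U (Matrix.of fun i j => (ri i j : ℂ)), ?_, ?_, ?_, ?_, ?_, ?_, ?_⟩
  · rw [hSeq, opOf_mul U _ _ hU1]
    have : (Matrix.of fun i j => (r i j : ℂ)) ⊙ (Matrix.of fun i j => (ri i j : ℂ)) =
        Matrix.of fun _ _ => (1 : ℂ) := by
      ext i j
      simp only [Matrix.hadamard_apply, Matrix.of_apply, hridef]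
      rw [← Complex.ofReal_mul, mul_inv_cancel₀ (hrpos i j).ne']
      norm_num
    rw [this, opOf_one U hU2]
  · rw [hSeq, opOf_mul U _ _ hU1]
    have : (Matrix.of fun i j => (ri i j : ℂ)) ⊙ (Matrix.of fun i j => (r i j : ℂ)) =
        Matrix.of fun _ _ => (1 : ℂ) := by
      ext i j
      simp only [Matrix.hadamard_apply, Matrix.of_apply, hridef]
      rw [← Complex.ofReal_mul, inv_mul_cancel₀ (hrpos i j).ne']
      norm_num
    rw [this, opOf_one U hU2]
  · intro h k
    rw [hSeq]
    exact opOf_sa U r h k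
  · intro h k
    exact opOf_sa U ri h k
  · intro h
    rw [hSeq]
    exact opOf_pos U r (fun i j => (hrpos i j).le) h
  · intro h
    exact opOf_pos U ri (fun i j => (inv_pos.mpr (hrpos i j)).le) h
  · intro h
    exact opOf_def U ri (fun i j => inv_pos.mpr (hrpos i j)) hU2 h

end AuxProof

/-- For twice continuously differentiable `f` with `f'' > 0` and positive
definite `ρ`, `σ`, the trace inequality
`Tr (a+b)* df'(ρ+σ) (a+b) ≤ Tr a* df'(ρ) a + Tr b* df'(σ) b` for all `a, b` is
equivalent to `df'(ρ+σ) ≤ (1/2) H₂(df'(ρ), df'(σ))` where `H₂` is the harmonic mean. -/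
theorem trace_inequality_iff_harmonic_mean (f : ℝ → ℝ)
    (hf : ContDiffOn ℝ 2 f (Set.Ioi 0))
    (hf'' : ∀ t > (0 : ℝ), 0 < deriv (deriv f) t) :
    ∀ n : ℕ, ∀ ρ σ : Matrix (Fin n) (Fin n) ℂ, ρ.PosDef → σ.PosDef →
      ((∀ a b : Matrix (Fin n) (Fin n) ℂ,
          Matrix.trace (star (a + b) * frechetDiff (deriv f) (ρ + σ) (a + b)) ≤
            Matrix.trace (star a * frechetDiff (deriv f) ρ a) +
            Matrix.trace (star b * frechetDiff (deriv f) σ b)) ↔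
        endLE (frechetDiff (deriv f) (ρ + σ))
          (((1 : ℂ) / 2) •
            harmonicMeanEnd (frechetDiff (deriv f) ρ) (frechetDiff (deriv f) σ))) := by
  intro n ρ σ hρ hσ
  have hg1 : ContinuousOn (deriv f) (Set.Ioi 0) :=
    hf.continuousOn_deriv_of_isOpen isOpen_Ioi one_le_two
  have hmono : StrictMonoOn (deriv f) (Set.Ioi 0) := by
    refine strictMonoOn_of_deriv_pos (convex_Ioi 0) hg1 ?_
    intro t ht
    rw [interior_Ioi] at ht
    exact hf'' t ht
  have hdd : ∀ x, 0 < x → ∀ y, 0 < y → 0 < divDiff (deriv f) x y := by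
    intro x hx y hy
    unfold divDiff
    split_ifs with hxy
    · subst hxy
      exact hf'' x hx
    · rcases lt_or_gt_of_ne hxy with hlt | hgt
      · have hlt' : deriv f x < deriv f y :=
          hmono (Set.mem_Ioi.mpr hx) (Set.mem_Ioi.mpr hy) hlt
        exact div_pos_of_neg_of_neg (sub_neg.mpr hlt') (sub_neg.mpr hlt)
      · have hgt' : deriv f y < deriv f x :=
          hmono (Set.mem_Ioi.mpr hy) (Set.mem_Ioi.mpr hx) hgt
        exact div_pos (sub_pos.mpr hgt') (sub_pos.mpr hgt)
  have hτ : (ρ + σ).PosDef := hρ.add hσ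
  obtain ⟨Ai, hAAi, hAiA, hA_sa, hAi_sa, hA_pos, hAi_pos, hAi_def⟩ :=
    frechet_package (deriv f) ρ hρ hdd
  obtain ⟨Bi, hBBi, hBiB, hB_sa, hBi_sa, hB_pos, hBi_pos, _⟩ :=
    frechet_package (deriv f) σ hσ hdd
  exact key_lemma (frechetDiff (deriv f) (ρ + σ)) (frechetDiff (deriv f) ρ)
    (frechetDiff (deriv f) σ) Ai Bi hAAi hAiA hBBi hBiB hA_sa hB_sa hAi_sa hBi_sa
    hA_pos hB_pos hAi_pos hBi_pos hAi_def

end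
end

section
/- The convex function f(t) = −log t on (0,∞) is subentropic: for every natural number k, the multivariate operator function (ρ₁,…,ρ_k) ↦ Tr log(ρ₁ + ⋯ + ρ_k) − (Tr log ρ₁ + ⋯ + Tr log ρ_k) is convex in positive definite operators ρ₁,…,ρ_k on any finite-dimensional Hilbert space. -/
open scoped Matrix
open Matrix
open scoped ComplexOrder

noncomputable section

/-!
For positive definite `ρ`, `Tr log ρ = log det ρ`, so the claim is the convexity of
`log det (ρ₁ + ⋯ + ρ_k) - ∑ log det ρᵢ`. Splitting off `ρ₁` writes this as the same function of
`ρ₂, …, ρ_k` plus the two-matrix function at the linear image `(ρ₁, ρ₂ + ⋯ + ρ_k)`, so it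
suffices to treat `k = 2`. There `log det (A + B) - log det A - log det B = - log det (A : B)`
for the parallel sum `A : B = (A⁻¹ + B⁻¹)⁻¹`. The parallel sum is jointly concave in the Loewner
order, being the minimum of the jointly linear expressions `Y* A Y + Z* B Z` over `Y + Z = 1`,
and `log det` is monotone and concave, as one sees by diagonalising two positive matrices
simultaneously.
-/

open scoped MatrixOrder

/-- Applied with `P = (A⁻¹ + B⁻¹)⁻¹`, `Y₀ = A⁻¹ P` and `Z₀ = B⁻¹ P`, this completion of the square
gives the variational formula for the parallel sum. -/
theorem star_add_mul_mul_add_add_star_sub_mul_mul_sub {R : Type*} [Ring R] [StarRing R]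
    {A B P Y₀ Z₀ : R} (hA : IsSelfAdjoint A) (hB : IsSelfAdjoint B) (hP : IsSelfAdjoint P)
    (hAY : A * Y₀ = P) (hBZ : B * Z₀ = P) (hYZ : Y₀ + Z₀ = 1) (W : R) :
    star (Y₀ + W) * A * (Y₀ + W) + star (Z₀ - W) * B * (Z₀ - W) = P + star W * (A + B) * W := by
  have hYA : star Y₀ * A = P := by rw [← hP.star_eq, ← hAY, star_mul, hA.star_eq]
  have hZB : star Z₀ * B = P := by rw [← hP.star_eq, ← hBZ, star_mul, hB.star_eq]
  calc star (Y₀ + W) * A * (Y₀ + W) + star (Z₀ - W) * B * (Z₀ - W)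
      = star Y₀ * A * Y₀ + star Z₀ * B * Z₀ + (star Y₀ * A - star Z₀ * B) * W
          + star W * (A * Y₀ - B * Z₀) + star W * (A + B) * W := by
        rw [star_add, star_sub]; noncomm_ring
    _ = P + star W * (A + B) * W := by
        rw [hYA, hZB, hAY, hBZ, sub_self, zero_mul, mul_zero, ← mul_add, hYZ, mul_one, add_zero,
          add_zero]

namespace Matrix

variable {𝕜 d : Type*} [RCLike 𝕜]

theorem convex_setOf_posDef [Fintype d] : Convex ℝ {M : Matrix d d 𝕜 | M.PosDef} :=
  convex_iff_forall_pos.2 fun _ hA _ hB _ _ ha hb _ =>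
    (PosDef.smul hA ha).add (PosDef.smul hB hb)

theorem convex_setOf_forall_posDef [Fintype d] (ι : Type*) :
    Convex ℝ {ρ : ι → Matrix d d 𝕜 | ∀ i, (ρ i).PosDef} :=
  fun _ hρ _ hσ _ _ ha hb hab i => convex_setOf_posDef (hρ i) (hσ i) ha hb hab

variable [Fintype d] [DecidableEq d]

theorem PosDef.exists_eq_conjTranspose_mul_diagonal_mul {X Y : Matrix d d 𝕜} (hX : X.PosDef)
    (hY : Y.PosSemidef) : ∃ (B : Matrix d d 𝕜) (e : d → ℝ), (∀ i, 0 ≤ e i) ∧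
      X = Bᴴ * B ∧ Y = Bᴴ * diagonal (fun i => (e i : 𝕜)) * B := by
  set S := CFC.sqrt X
  have hSH : S.IsHermitian := (nonneg_iff_posSemidef.1 (CFC.sqrt_nonneg X)).1
  have hSS : S * S = X := CFC.sqrt_mul_sqrt_self X hX.posSemidef.nonneg
  have hS : IsUnit S.det := by
    refine isUnit_iff_ne_zero.2 fun h => hX.det_pos.ne' ?_
    rw [← hSS, det_mul, h, zero_mul]
  have hZ : (S⁻¹ * Y * S⁻¹).PosSemidef := by
    simpa [hSH.inv.eq] using hY.conjTranspose_mul_mul_same S⁻¹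
  obtain ⟨U, e, hU, he, hZU⟩ : ∃ (U : Matrix d d 𝕜) (e : d → ℝ), U * star U = 1 ∧
      (∀ i, 0 ≤ e i) ∧ S⁻¹ * Y * S⁻¹ = U * diagonal (fun i => (e i : 𝕜)) * star U :=
    ⟨_, _, Unitary.mul_star_self_of_mem hZ.1.eigenvectorUnitary.2, hZ.eigenvalues_nonneg,
      hZ.1.spectral_theorem⟩
  have hB : (star U * S)ᴴ = S * U := by
    rw [conjTranspose_mul, hSH.eq, star_eq_conjTranspose, conjTranspose_conjTranspose]
  refine ⟨star U * S, e, he, ?_, ?_⟩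
  · rw [hB, Matrix.mul_assoc, ← Matrix.mul_assoc U, hU, Matrix.one_mul, hSS]
  · calc Y = S * (S⁻¹ * Y * S⁻¹) * S := by
          simp only [← Matrix.mul_assoc, mul_nonsing_inv _ hS, Matrix.one_mul]
          rw [Matrix.mul_assoc, nonsing_inv_mul _ hS, Matrix.mul_one]
      _ = _ := by
          rw [hZU, hB]
          simp only [Matrix.mul_assoc]

theorem det_smul_add_smul_eq_det_mul_prod {X Y B : Matrix d d 𝕜} {e : d → ℝ} (hX : X = Bᴴ * B)
    (hY : Y = Bᴴ * diagonal (fun i => (e i : 𝕜)) * B) (a b : ℝ) :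
    (a • X + b • Y).det = X.det * ∏ i, ((a + b * e i : ℝ) : 𝕜) := by
  have hdiag : diagonal (fun i => ((a + b * e i : ℝ) : 𝕜))
      = a • (1 : Matrix d d 𝕜) + b • diagonal (fun i => (e i : 𝕜)) := by
    ext i j
    by_cases h : i = j
    · subst h
      simp [RCLike.real_smul_eq_coe_mul]
    · simp [h]
  have hcomb : a • X + b • Y = Bᴴ * diagonal (fun i => ((a + b * e i : ℝ) : 𝕜)) * B := by
    rw [hX, hY, hdiag, Matrix.mul_add, Matrix.add_mul, Matrix.mul_smul, Matrix.smul_mul,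
      Matrix.mul_one, Matrix.mul_smul, Matrix.smul_mul]
  rw [hcomb, hX, det_mul, det_mul, det_diagonal, det_mul]
  ring

noncomputable def logDet (M : Matrix d d 𝕜) : ℝ := Real.log ‖M.det‖

theorem logDet_inv (M : Matrix d d 𝕜) : logDet M⁻¹ = -logDet M := by
  rw [logDet, logDet, det_nonsing_inv, Ring.inverse_eq_inv', norm_inv, Real.log_inv]

theorem logDet_eq_add_sum_log_of_det_eq {M N : Matrix d d 𝕜} {c : d → ℝ}
    (h : M.det = N.det * ∏ i, (c i : 𝕜)) (hN : N.det ≠ 0) (hc : ∀ i, c i ≠ 0) :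
    logDet M = logDet N + ∑ i, Real.log (c i) := by
  have hc' : ∀ i, ‖(c i : 𝕜)‖ ≠ 0 := fun i => by simpa using hc i
  rw [logDet, h, norm_mul, norm_prod, Real.log_mul (norm_ne_zero_iff.2 hN)
    (Finset.prod_ne_zero_iff.2 fun i _ => hc' i), Real.log_prod fun i _ => hc' i]
  simp [logDet, Real.log_abs]

theorem PosDef.logDet_le_logDet {X Y : Matrix d d 𝕜} (hX : X.PosDef) (hXY : X ≤ Y) :
    logDet X ≤ logDet Y := by
  obtain ⟨B, e, he, hXB, hYX⟩ := hX.exists_eq_conjTranspose_mul_diagonal_mul (le_iff.1 hXY)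
  have hY : Y = (1 : ℝ) • X + (1 : ℝ) • (Y - X) := by rw [one_smul, one_smul, add_sub_cancel]
  have hpos : ∀ i, 0 < 1 + 1 * e i := fun i => by linarith [he i]
  rw [hY, logDet_eq_add_sum_log_of_det_eq (det_smul_add_smul_eq_det_mul_prod hXB hYX 1 1)
    hX.det_pos.ne' fun i => (hpos i).ne']
  have hlog : ∀ i, 0 ≤ Real.log (1 + 1 * e i) := fun i => Real.log_nonneg (by linarith [he i])
  linarith [Finset.sum_nonneg fun i (_ : i ∈ Finset.univ) => hlog i]

theorem concaveOn_logDet : ConcaveOn ℝ {M : Matrix d d 𝕜 | M.PosDef} logDet := by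
  refine concaveOn_iff_forall_pos.2 ⟨convex_setOf_posDef, fun X hX Y hY a b ha hb hab => ?_⟩
  obtain ⟨B, e, he, hXB, hYB⟩ :=
    PosDef.exists_eq_conjTranspose_mul_diagonal_mul hX (PosDef.posSemidef hY)
  have hdet := det_smul_add_smul_eq_det_mul_prod hXB hYB
  have hdetY : Y.det = X.det * ∏ i, (e i : 𝕜) := by simpa using hdet 0 1
  have hepos : ∀ i, 0 < e i := fun i => (he i).lt_of_ne' fun h0 => (PosDef.det_pos hY).ne' <| by
    rw [hdetY, Finset.prod_eq_zero (Finset.mem_univ i) (by simp [h0]), mul_zero]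
  have hXdet := (PosDef.det_pos hX).ne'
  rw [smul_eq_mul, smul_eq_mul,
    logDet_eq_add_sum_log_of_det_eq hdetY hXdet fun i => (hepos i).ne',
    logDet_eq_add_sum_log_of_det_eq (hdet a b) hXdet fun i => by positivity [hepos i]]
  have hlog : ∀ i, b * Real.log (e i) ≤ Real.log (a + b * e i) := fun i => by
    simpa using strictConcaveOn_log_Ioi.concaveOn.2 (Set.mem_Ioi.2 one_pos) (hepos i) ha.le hb.le
      hab
  calc a * logDet X + b * (logDet X + ∑ i, Real.log (e i))
      = logDet X + ∑ i, b * Real.log (e i) := by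
        rw [← Finset.mul_sum]
        linear_combination logDet X * hab
    _ ≤ logDet X + ∑ i, Real.log (a + b * e i) := by gcongr with i; exact hlog i

noncomputable def parallelSum (A B : Matrix d d 𝕜) : Matrix d d 𝕜 := (A⁻¹ + B⁻¹)⁻¹

variable {A B : Matrix d d 𝕜}

theorem PosDef.parallelSum (hA : A.PosDef) (hB : B.PosDef) : (parallelSum A B).PosDef :=
  (hA.inv.add hB.inv).inv

theorem logDet_add_sub_logDet_sub_logDet (hA : A.PosDef) (hB : B.PosDef) :
    logDet (A + B) - logDet A - logDet B = -logDet (parallelSum A B) := by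
  have hAdet := hA.det_pos.ne'
  have hBdet := hB.det_pos.ne'
  have hABdet := (hA.add hB).det_pos.ne'
  have hdet : (A⁻¹ + B⁻¹).det = (A + B).det * (A.det⁻¹ * B.det⁻¹) := by
    have : A⁻¹ + B⁻¹ = A⁻¹ * (A + B) * B⁻¹ := by
      rw [Matrix.mul_add, Matrix.add_mul, nonsing_inv_mul _ hAdet.isUnit, Matrix.one_mul,
        Matrix.mul_assoc, mul_nonsing_inv _ hBdet.isUnit, Matrix.mul_one, add_comm]
    rw [this, det_mul, det_mul, det_nonsing_inv, det_nonsing_inv, Ring.inverse_eq_inv']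
    ring
  rw [parallelSum, logDet_inv, neg_neg]
  simp only [logDet]
  rw [hdet, norm_mul, norm_mul, norm_inv, norm_inv,
    Real.log_mul (norm_ne_zero_iff.2 hABdet) (by simpa using ⟨hAdet, hBdet⟩),
    Real.log_mul (by simpa using hAdet) (by simpa using hBdet), Real.log_inv, Real.log_inv]
  ring

theorem isLeast_parallelSum (hA : A.PosDef) (hB : B.PosDef) :
    IsLeast {M | ∃ Y Z, Y + Z = 1 ∧ M = Yᴴ * A * Y + Zᴴ * B * Z} (parallelSum A B) := by
  set P := parallelSum A B
  have hYZ : A⁻¹ * P + B⁻¹ * P = 1 := by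
    rw [← Matrix.add_mul]
    exact mul_nonsing_inv _ (hA.inv.add hB.inv).det_pos.ne'.isUnit
  have hsq := star_add_mul_mul_add_add_star_sub_mul_mul_sub hA.1 hB.1 (hA.parallelSum hB).1
    (mul_nonsing_inv_cancel_left _ _ hA.det_pos.ne'.isUnit)
    (mul_nonsing_inv_cancel_left _ _ hB.det_pos.ne'.isUnit) hYZ
  simp only [star_eq_conjTranspose] at hsq
  refine ⟨⟨A⁻¹ * P, B⁻¹ * P, hYZ, by simpa using (hsq 0).symm⟩, ?_⟩
  rintro _ ⟨Y, Z, hYZ', rfl⟩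
  obtain ⟨W, rfl⟩ : ∃ W, Y = A⁻¹ * P + W := ⟨Y - A⁻¹ * P, by abel⟩
  obtain rfl : Z = B⁻¹ * P - W := by
    rw [← hYZ] at hYZ'
    exact eq_sub_of_add_eq <| add_left_cancel (a := A⁻¹ * P) <| by rw [← hYZ']; abel
  rw [hsq, le_iff, add_sub_cancel_left]
  exact (hA.add hB).posSemidef.conjTranspose_mul_mul_same W

theorem concaveOn_parallelSum :
    ConcaveOn ℝ {p : Matrix d d 𝕜 × Matrix d d 𝕜 | p.1.PosDef ∧ p.2.PosDef}
      (fun p => parallelSum p.1 p.2) := by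
  refine ⟨convex_setOf_posDef.prod convex_setOf_posDef, fun p hp q hq a b ha hb hab => ?_⟩
  have hpq := (convex_setOf_posDef.prod convex_setOf_posDef) hp hq ha hb hab
  obtain ⟨⟨Y, Z, hYZ, hopt⟩, -⟩ := isLeast_parallelSum hpq.1 hpq.2
  have hp' := (isLeast_parallelSum hp.1 hp.2).2 ⟨Y, Z, hYZ, rfl⟩
  have hq' := (isLeast_parallelSum hq.1 hq.2).2 ⟨Y, Z, hYZ, rfl⟩
  calc a • parallelSum p.1 p.2 + b • parallelSum q.1 q.2
      ≤ a • (Yᴴ * p.1 * Y + Zᴴ * p.2 * Z) + b • (Yᴴ * q.1 * Y + Zᴴ * q.2 * Z) :=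
        add_le_add (smul_le_smul_of_nonneg_left hp' ha) (smul_le_smul_of_nonneg_left hq' hb)
    _ = parallelSum (a • p + b • q).1 (a • p + b • q).2 := by
        rw [hopt]
        simp only [Prod.fst_add, Prod.snd_add, Prod.smul_fst, Prod.smul_snd, Matrix.mul_add,
          Matrix.add_mul, Matrix.mul_smul, Matrix.smul_mul, smul_add]
        abel

theorem convexOn_logDet_add_sub_logDet_sub_logDet :
    ConvexOn ℝ {p : Matrix d d 𝕜 × Matrix d d 𝕜 | p.1.PosDef ∧ p.2.PosDef}
      (fun p => logDet (p.1 + p.2) - logDet p.1 - logDet p.2) := by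
  refine convexOn_iff_forall_pos.2 ⟨concaveOn_parallelSum.1, fun p hp q hq a b ha hb hab => ?_⟩
  have hpq := concaveOn_parallelSum.1 hp hq ha.le hb.le hab
  have hconc :=
    concaveOn_logDet.2 (hp.1.parallelSum hp.2) (hq.1.parallelSum hq.2) ha.le hb.le hab
  have hmono := PosDef.logDet_le_logDet
    (convex_setOf_posDef (hp.1.parallelSum hp.2) (hq.1.parallelSum hq.2) ha.le hb.le hab)
    (concaveOn_parallelSum.2 hp hq ha.le hb.le hab)
  simp only [smul_eq_mul] at hconc hmono ⊢
  rw [logDet_add_sub_logDet_sub_logDet hp.1 hp.2, logDet_add_sub_logDet_sub_logDet hq.1 hq.2,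
    logDet_add_sub_logDet_sub_logDet hpq.1 hpq.2]
  linarith

theorem convexOn_logDet_sum_sub_sum_logDet (k : ℕ) :
    ConvexOn ℝ {ρ : Fin (k + 1) → Matrix d d 𝕜 | ∀ i, (ρ i).PosDef}
      (fun ρ => logDet (∑ i, ρ i) - ∑ i, logDet (ρ i)) := by
  induction k with
  | zero => simpa using convexOn_const (0 : ℝ) (convex_setOf_forall_posDef (Fin 1))
  | succ k ih =>
    let headTail : (Fin (k + 2) → Matrix d d 𝕜) →ₗ[ℝ] Matrix d d 𝕜 × Matrix d d 𝕜 :=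
      (LinearMap.proj 0).prod (∑ i : Fin (k + 1), LinearMap.proj i.succ)
    have headTail_apply (ρ) : headTail ρ = (ρ 0, ∑ i : Fin (k + 1), ρ i.succ) := by
      simp [headTail]
    let tail : (Fin (k + 2) → Matrix d d 𝕜) →ₗ[ℝ] Fin (k + 1) → Matrix d d 𝕜 :=
      LinearMap.funLeft ℝ _ Fin.succ
    have hs : Convex ℝ {ρ : Fin (k + 2) → Matrix d d 𝕜 | ∀ i, (ρ i).PosDef} :=
      convex_setOf_forall_posDef _
    have hhead := (convexOn_logDet_add_sub_logDet_sub_logDet.comp_linearMap headTail).subset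
      (fun ρ hρ => by
        rw [Set.mem_preimage, headTail_apply]
        exact ⟨hρ 0, posDef_sum Finset.univ_nonempty fun (i : Fin (k + 1)) _ => hρ i.succ⟩) hs
    have htail := (ih.comp_linearMap tail).subset (s := {ρ | ∀ i, (ρ i).PosDef})
      (fun _ hρ i => hρ i.succ) hs
    refine (hhead.add htail).congr fun ρ _ => ?_
    simp only [Pi.add_apply, Function.comp_apply, headTail_apply, tail, LinearMap.funLeft_apply]
    rw [Fin.sum_univ_succ (n := k + 1), Fin.sum_univ_succ (n := k + 1)]
    ring

end Matrix

theorem trFn_neg_log {d : Type} [Fintype d] [DecidableEq d] {ρ : Matrix d d ℂ}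
    (hρ : ρ.PosDef) : trFn (fun t => -Real.log t) ρ = -logDet ρ := by
  have hdet : ρ.det = ((∏ i, hρ.1.eigenvalues i : ℝ) : ℂ) := by
    rw [hρ.1.det_eq_prod_eigenvalues]
    simp
  rw [trFn, dif_pos hρ.1, logDet, hdet, Complex.norm_real,
    Real.norm_of_nonneg <| Finset.prod_nonneg fun i _ => (hρ.eigenvalues_pos i).le,
    Real.log_prod fun i _ => (hρ.eigenvalues_pos i).ne', Finset.sum_neg_distrib]

/-- The convex function `f(t) = -log t` is subentropic: for every `k`
the function `(ρ₁,…,ρ_k) ↦ Tr log(ρ₁+⋯+ρ_k) - (Tr log ρ₁ + ⋯ + Tr log ρ_k)` is convex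
in positive definite operators on any finite-dimensional Hilbert space. -/
theorem neg_log_subentropic : Subentropic (fun t => - Real.log t) := by
  intro k
  refine ⟨strictConcaveOn_log_Ioi.concaveOn.neg, fun n => ?_⟩
  cases k with
  | zero =>
    simpa using convexOn_const (-trFn (fun t => -Real.log t) (0 : Matrix (Fin n) (Fin n) ℂ))
      convex_univ
  | succ k =>
    refine (convexOn_logDet_sum_sub_sum_logDet k).congr fun ρ hρ => ?_
    rw [trFn_neg_log (posDef_sum Finset.univ_nonempty fun i _ => hρ i),
      Finset.sum_congr rfl fun i _ => trFn_neg_log (hρ i), Finset.sum_neg_distrib]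
    ring
end
end

section
/- For positive definite operators ρ and σ and an arbitrary operator h on a finite-dimensional Hilbert space, Tr h*(ρ+σ)h(ρ+σ) ≥ Tr h*ρhρ + Tr h*σhσ; equivalently, Tr h*ρhσ + Tr h*σhρ ≥ 0. -/
open scoped Matrix
open Matrix
open scoped ComplexOrder

noncomputable section

open scoped MatrixOrder in
theorem Matrix.PosSemidef.trace_mul_nonneg {m 𝕜 : Type*} [Fintype m] [RCLike 𝕜]
    {A B : Matrix m m 𝕜} (hA : A.PosSemidef) (hB : B.PosSemidef) : 0 ≤ (A * B).trace := by
  classical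
  obtain ⟨C, rfl⟩ := CStarAlgebra.nonneg_iff_eq_star_mul_self.mp hB.nonneg
  rw [← mul_assoc, trace_mul_comm, ← mul_assoc]
  exact (hA.mul_mul_conjTranspose_same C).trace_nonneg

theorem Matrix.PosSemidef.trace_star_mul_mul_mul_nonneg {m 𝕜 : Type*} [Fintype m] [RCLike 𝕜]
    {ρ σ : Matrix m m 𝕜} (hρ : ρ.PosSemidef) (hσ : σ.PosSemidef) (h : Matrix m m 𝕜) :
    0 ≤ (star h * ρ * h * σ).trace :=
  (hρ.conjTranspose_mul_mul_same h).trace_mul_nonneg hσ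

theorem Matrix.trace_star_mul_add_mul_mul_add {m R : Type*} [Fintype m] [Ring R] [StarRing R]
    (ρ σ h : Matrix m m R) :
    (star h * (ρ + σ) * h * (ρ + σ)).trace =
      (star h * ρ * h * ρ).trace + (star h * σ * h * σ).trace +
        ((star h * ρ * h * σ).trace + (star h * σ * h * ρ).trace) := by
  simp only [Matrix.mul_add, Matrix.add_mul, Matrix.trace_add]
  abel

/-- For positive definite `ρ`, `σ` and arbitrary `h`,
`Tr h*(ρ+σ)h(ρ+σ) ≥ Tr h*ρhρ + Tr h*σhσ`; equivalently
`Tr h*ρhσ + Tr h*σhρ ≥ 0`. -/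
theorem trace_quadratic_superadditive (n : ℕ) (ρ σ h : Matrix (Fin n) (Fin n) ℂ)
    (hρ : ρ.PosDef) (hσ : σ.PosDef) :
    Matrix.trace (star h * ρ * h * ρ) + Matrix.trace (star h * σ * h * σ) ≤
      Matrix.trace (star h * (ρ + σ) * h * (ρ + σ)) ∧
    0 ≤ Matrix.trace (star h * ρ * h * σ) + Matrix.trace (star h * σ * h * ρ) := by
  have hcross : 0 ≤ Matrix.trace (star h * ρ * h * σ) + Matrix.trace (star h * σ * h * ρ) :=
    add_nonneg (hρ.posSemidef.trace_star_mul_mul_mul_nonneg hσ.posSemidef h)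
      (hσ.posSemidef.trace_star_mul_mul_mul_nonneg hρ.posSemidef h)
  refine ⟨?_, hcross⟩
  rw [trace_star_mul_add_mul_mul_add]
  exact le_add_of_nonneg_right hcross

end
end
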